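/- arXiv:2404.14562 — 2 statements merged into one kernel-verified Lean document; each statement's English description precedes it below -/
import Mathlib

section
/- For every complex number s with Re s > 2, the function ξ ↦ ξ₁² · (1 + |ξ|²)^{−s/2 − 2} is integrable on ℝ² and (1/(4π²)) ∫_{ℝ²} ξ₁² (1 + |ξ|²)^{−s/2 − 2} dξ = 1/(2π · s · (s + 2)). -/
open MeasureTheory Real Set Filter
open scoped Topology

/-!
In polar coordinates the integral factors as `∫_{-π}^{π} cos² θ dθ · ∫_0^∞ r³ (1 + r²)^c dr` with
`c = -s/2 - 2`. The radial integral equals `1 / (2 (c + 1) (c + 2))`, since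
`(1 + r²)^(c+2) / (2 (c + 2)) - (1 + r²)^(c+1) / (2 (c + 1))` is an antiderivative of the integrand
that vanishes at infinity. Integrability follows from `ξ₁² ≤ 1 + |ξ|²`, which dominates the
integrand by `(1 + |ξ|²)^(Re c + 1)`, integrable on `ℝ²` as `Re c < -2`.
-/

lemma hasDerivAt_ofReal_one_add_sq_cpow (c : ℂ) (x : ℝ) :
    HasDerivAt (fun r : ℝ => ((1 + r ^ 2 : ℝ) : ℂ) ^ c)
      (c * ((1 + x ^ 2 : ℝ) : ℂ) ^ (c - 1) * (2 * x)) x := by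
  have hbase : HasDerivAt (fun r : ℝ => ((1 + r ^ 2 : ℝ) : ℂ)) (2 * x) x := by
    convert ((hasDerivAt_pow 2 x).const_add 1).ofReal_comp using 1
    push_cast
    ring
  exact (Complex.hasStrictDerivAt_cpow_const
    (Complex.ofReal_mem_slitPlane.2 (by positivity : (0 : ℝ) < 1 + x ^ 2))).hasDerivAt.comp x hbase

lemma tendsto_ofReal_one_add_sq_cpow_atTop {c : ℂ} (hc : c.re < 0) :
    Tendsto (fun r : ℝ => ((1 + r ^ 2 : ℝ) : ℂ) ^ c) atTop (𝓝 0) := by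
  rw [tendsto_zero_iff_norm_tendsto_zero]
  simp_rw [fun r : ℝ => Complex.norm_cpow_eq_rpow_re_of_pos (by positivity : 0 < 1 + r ^ 2) c]
  have hbase : Tendsto (fun r : ℝ => 1 + r ^ 2) atTop atTop :=
    tendsto_atTop_add_const_left _ _ (tendsto_pow_atTop two_ne_zero)
  simpa [Function.comp_def] using (tendsto_rpow_neg_atTop (neg_pos.2 hc)).comp hbase

lemma pow_three_le_one_add_sq_rpow {r : ℝ} (hr : 0 ≤ r) : r ^ 3 ≤ (1 + r ^ 2) ^ (3 / 2 : ℝ) := by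
  have hsqrt : r ≤ √(1 + r ^ 2) := Real.le_sqrt_of_sq_le (by linarith)
  calc r ^ 3 ≤ √(1 + r ^ 2) ^ 3 := pow_le_pow_left₀ hr hsqrt 3
    _ = (1 + r ^ 2) ^ (3 / 2 : ℝ) := by
      rw [Real.sqrt_eq_rpow, ← Real.rpow_natCast, ← Real.rpow_mul (by positivity)]
      norm_num

lemma sq_norm_le_fst_sq_add_snd_sq (ξ : ℝ × ℝ) : ‖ξ‖ ^ 2 ≤ ξ.1 ^ 2 + ξ.2 ^ 2 := by
  rw [Prod.norm_def, Real.norm_eq_abs, Real.norm_eq_abs]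
  rcases max_cases |ξ.1| |ξ.2| with ⟨h, _⟩ | ⟨h, _⟩ <;> rw [h, sq_abs] <;>
    nlinarith [sq_nonneg ξ.1, sq_nonneg ξ.2]

lemma integral_Ioo_neg_pi_pi_cos_sq : ∫ θ in Ioo (-π) π, cos θ ^ 2 = π := by
  rw [← integral_Ioc_eq_integral_Ioo, ← intervalIntegral.integral_of_le (by linarith [pi_pos]),
    integral_cos_sq]
  simp

lemma integrableOn_Ioi_pow_three_mul_one_add_sq_cpow {c : ℂ} (hc : c.re < -2) :
    IntegrableOn (fun r : ℝ => (r : ℂ) ^ 3 * ((1 + r ^ 2 : ℝ) : ℂ) ^ c) (Ioi 0) := by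
  have hdom : Integrable (fun r : ℝ => (1 + ‖r‖ ^ 2) ^ (-(-2 * c.re - 3) / 2)) :=
    integrable_rpow_neg_one_add_norm_sq (by
      simp only [Module.finrank_self, Nat.cast_one, neg_mul]; linarith)
  refine hdom.integrableOn.mono' (by fun_prop) ((ae_restrict_iff' measurableSet_Ioi).2 ?_)
  refine Eventually.of_forall fun r (hr : 0 < r) => ?_
  have hpos : 0 < 1 + r ^ 2 := by positivity
  calc ‖(r : ℂ) ^ 3 * ((1 + r ^ 2 : ℝ) : ℂ) ^ c‖ = r ^ 3 * (1 + r ^ 2) ^ c.re := by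
        rw [norm_mul, Complex.norm_cpow_eq_rpow_re_of_pos hpos, norm_pow, Complex.norm_real,
          Real.norm_of_nonneg hr.le]
    _ ≤ (1 + r ^ 2) ^ (3 / 2 : ℝ) * (1 + r ^ 2) ^ c.re := by
        gcongr
        exact pow_three_le_one_add_sq_rpow hr.le
    _ = (1 + ‖r‖ ^ 2) ^ (-(-2 * c.re - 3) / 2) := by
        rw [← Real.rpow_add hpos, Real.norm_eq_abs, sq_abs]
        ring_nf

lemma integral_Ioi_pow_three_mul_one_add_sq_cpow {c : ℂ} (hc : c.re < -2) :
    ∫ r in Ioi (0 : ℝ), (r : ℂ) ^ 3 * ((1 + r ^ 2 : ℝ) : ℂ) ^ c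
      = 1 / (2 * (c + 1) * (c + 2)) := by
  have hc1 : c + 1 ≠ 0 := neg_ne_zero.1 (Complex.ne_zero_of_re_pos (by
    simp only [Complex.neg_re, Complex.add_re, Complex.one_re]; linarith))
  have hc2 : c + 2 ≠ 0 := neg_ne_zero.1 (Complex.ne_zero_of_re_pos (by
    simp only [Complex.neg_re, Complex.add_re, Complex.re_ofNat]; linarith))
  set F : ℝ → ℂ := fun r => ((1 + r ^ 2 : ℝ) : ℂ) ^ (c + 2) / (2 * (c + 2))
    - ((1 + r ^ 2 : ℝ) : ℂ) ^ (c + 1) / (2 * (c + 1)) with hF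
  have hderiv : ∀ x ∈ Ici (0 : ℝ),
      HasDerivAt F ((x : ℂ) ^ 3 * ((1 + x ^ 2 : ℝ) : ℂ) ^ c) x := by
    intro x _
    have hne : ((1 + x ^ 2 : ℝ) : ℂ) ≠ 0 := Complex.ofReal_ne_zero.2 (by positivity)
    refine (((hasDerivAt_ofReal_one_add_sq_cpow (c + 2) x).div_const (2 * (c + 2))).sub
      ((hasDerivAt_ofReal_one_add_sq_cpow (c + 1) x).div_const (2 * (c + 1)))).congr_deriv ?_
    rw [add_sub_cancel_right, show c + 2 - 1 = c + 1 by ring, Complex.cpow_add _ _ hne,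
      Complex.cpow_one]
    field_simp
    push_cast
    ring
  have hlim : Tendsto F atTop (𝓝 0) := by
    have h := ((tendsto_ofReal_one_add_sq_cpow_atTop (c := c + 2)
      (by simp only [Complex.add_re, Complex.re_ofNat]; linarith)).div_const
      (2 * (c + 2))).sub ((tendsto_ofReal_one_add_sq_cpow_atTop (c := c + 1)
        (by simp only [Complex.add_re, Complex.one_re]; linarith)).div_const (2 * (c + 1)))
    simpa only [zero_div, sub_zero] using h
  rw [integral_Ioi_of_hasDerivAt_of_tendsto' hderiv
    (integrableOn_Ioi_pow_three_mul_one_add_sq_cpow hc) hlim, hF]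
  simp only [zero_pow two_ne_zero, add_zero, Complex.ofReal_one, Complex.one_cpow]
  field_simp
  ring

lemma integral_fst_sq_mul_comp_sq_add_sq (f : ℝ → ℂ) :
    ∫ ξ : ℝ × ℝ, ((ξ.1 ^ 2 : ℝ) : ℂ) * f (ξ.1 ^ 2 + ξ.2 ^ 2)
      = π * ∫ r in Ioi (0 : ℝ), (r : ℂ) ^ 3 * f (r ^ 2) := by
  have hpolar : EqOn
      (fun p : ℝ × ℝ => p.1 • ((((polarCoord.symm p).1 ^ 2 : ℝ) : ℂ) *
        f ((polarCoord.symm p).1 ^ 2 + (polarCoord.symm p).2 ^ 2)))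
      (fun p => (p.1 : ℂ) ^ 3 * f (p.1 ^ 2) * ((cos p.2 ^ 2 : ℝ) : ℂ)) polarCoord.target := by
    rintro ⟨r, θ⟩ _
    have hsq : (r * cos θ) ^ 2 + (r * sin θ) ^ 2 = r ^ 2 := by
      linear_combination r ^ 2 * sin_sq_add_cos_sq θ
    simp only [polarCoord_symm_apply, hsq, Complex.real_smul]
    push_cast
    ring
  rw [← integral_comp_polarCoord_symm, setIntegral_congr_fun polarCoord.open_target.measurableSet
    hpolar, polarCoord_target, Measure.volume_eq_prod,
    setIntegral_prod_mul (fun r : ℝ => (r : ℂ) ^ 3 * f (r ^ 2)) (fun θ => ((cos θ ^ 2 : ℝ) : ℂ)),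
    integral_complex_ofReal, integral_Ioo_neg_pi_pi_cos_sq, mul_comm]

lemma integrable_sq_mul_one_add_sq_cpow {c : ℂ} (hc : c.re < -2) :
    Integrable (fun ξ : ℝ × ℝ => ((ξ.1 ^ 2 : ℝ) : ℂ) * ((1 + ξ.1 ^ 2 + ξ.2 ^ 2 : ℝ) : ℂ) ^ c) := by
  have hdom : Integrable (fun ξ : ℝ × ℝ => (1 + ‖ξ‖ ^ 2) ^ (-(-2 * c.re - 2) / 2)) :=
    integrable_rpow_neg_one_add_norm_sq (by
      simp only [Module.finrank_prod, Module.finrank_self, Nat.reduceAdd, Nat.cast_ofNat, neg_mul]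
      linarith)
  refine hdom.mono' (by fun_prop) (Eventually.of_forall fun ξ => ?_)
  have hpos : 0 < 1 + ξ.1 ^ 2 + ξ.2 ^ 2 := by positivity
  calc ‖((ξ.1 ^ 2 : ℝ) : ℂ) * ((1 + ξ.1 ^ 2 + ξ.2 ^ 2 : ℝ) : ℂ) ^ c‖
        = ξ.1 ^ 2 * (1 + ξ.1 ^ 2 + ξ.2 ^ 2) ^ c.re := by
        rw [norm_mul, Complex.norm_cpow_eq_rpow_re_of_pos hpos, Complex.norm_real,
          Real.norm_of_nonneg (sq_nonneg _)]
    _ ≤ (1 + ξ.1 ^ 2 + ξ.2 ^ 2) * (1 + ξ.1 ^ 2 + ξ.2 ^ 2) ^ c.re := by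
        gcongr
        nlinarith [sq_nonneg ξ.2]
    _ = (1 + ξ.1 ^ 2 + ξ.2 ^ 2) ^ (c.re + 1) := by
        rw [Real.rpow_add_one hpos.ne', mul_comm]
    _ ≤ (1 + ‖ξ‖ ^ 2) ^ (-(-2 * c.re - 2) / 2) := by
        rw [show -(-2 * c.re - 2) / 2 = c.re + 1 by ring]
        exact Real.rpow_le_rpow_of_nonpos (by positivity)
          (by linarith [sq_norm_le_fst_sq_add_snd_sq ξ]) (by linarith)

/-- For `Re s > 2`, `ξ ↦ ξ₁² (1 + |ξ|²)^(-s/2 - 2)` is integrable on `ℝ²` and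
`(1/(4π²)) ∫_{ℝ²} ξ₁² (1 + |ξ|²)^(-s/2 - 2) dξ = 1/(2π s (s+2))`. -/
theorem integral_sq_mul_one_add_sq_cpow (s : ℂ) (hs : 2 < s.re) :
    Integrable (fun ξ : ℝ × ℝ =>
      ((ξ.1 ^ 2 : ℝ) : ℂ) * ((1 + ξ.1 ^ 2 + ξ.2 ^ 2 : ℝ) : ℂ) ^ (-s / 2 - 2)) ∧
    (1 / (4 * (Real.pi : ℂ) ^ 2)) *
        ∫ ξ : ℝ × ℝ,
          ((ξ.1 ^ 2 : ℝ) : ℂ) * ((1 + ξ.1 ^ 2 + ξ.2 ^ 2 : ℝ) : ℂ) ^ (-s / 2 - 2) =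
      1 / (2 * (Real.pi : ℂ) * s * (s + 2)) := by
  have hc : (-s / 2 - 2).re < -2 := by
    simp only [Complex.sub_re, Complex.div_ofNat_re, Complex.neg_re, Complex.re_ofNat]; linarith
  refine ⟨integrable_sq_mul_one_add_sq_cpow hc, ?_⟩
  have hs0 : s ≠ 0 := Complex.ne_zero_of_re_pos (by linarith)
  have hs2 : s + 2 ≠ 0 := Complex.ne_zero_of_re_pos (by
    simp only [Complex.add_re, Complex.re_ofNat]; linarith)
  have hpi : (π : ℂ) ≠ 0 := Complex.ofReal_ne_zero.2 pi_ne_zero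
  simp only [add_assoc]
  rw [integral_fst_sq_mul_comp_sq_add_sq (fun t => ((1 + t : ℝ) : ℂ) ^ (-s / 2 - 2)),
    integral_Ioi_pow_three_mul_one_add_sq_cpow hc, show -s / 2 - 2 + 1 = -(s + 2) / 2 by ring,
    show -s / 2 - 2 + 2 = -s / 2 by ring]
  field_simp
  ring
end

section
/- For every complex number s with Re s > 2, the function ξ ↦ ξ₁⁴ · (1 + |ξ|²)^{−s/2 − 3} is integrable on ℝ² and (1/(4π²)) ∫_{ℝ²} ξ₁⁴ (1 + |ξ|²)^{−s/2 − 3} dξ = 3/(2π · s · (s + 2) · (s + 4)). -/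
/-!
In polar coordinates the integral factors as
`(∫₀^∞ r⁵ (1 + r²)^w dr) · ∫_{-π}^{π} cos⁴ θ dθ` with `w = -s/2 - 3`.
Writing `r⁵ = r ((1 + r²) - 1)²` splits the radial integral into three integrals
`∫₀^∞ r (1 + r²)^c dr = -1 / (2 (c + 1))`, each computed from the antiderivative
`(1 + r²)^(c+1) / (2 (c + 1))`; the angular integral is `3π/4`. Integrability comes from
`ξ₁⁴ ≤ (1 + |ξ|²)²`, which bounds the integrand by `(1 + |ξ|²)^(Re w + 2)`.
-/

open MeasureTheory Set Real Filter

lemma tendsto_one_add_sq_rpow_atTop_zero {p : ℝ} (hp : p < 0) :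
    Tendsto (fun r : ℝ => (1 + r ^ 2) ^ p) atTop (nhds 0) :=
  (tendsto_rpow_neg_atTop (neg_pos.2 hp)).comp
    (tendsto_atTop_add_const_left _ 1 (tendsto_pow_atTop two_ne_zero)) |>.congr fun r => by simp

lemma integrableOn_Ioi_mul_one_add_sq_rpow {p : ℝ} (hp : p < -1) :
    IntegrableOn (fun r : ℝ => r * (1 + r ^ 2) ^ p) (Ioi 0) := by
  have hp1 : p + 1 ≠ 0 := by linarith
  refine integrableOn_Ioi_deriv_of_nonneg' (g := fun r => (1 + r ^ 2) ^ (p + 1) / (2 * (p + 1)))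
    (fun r _ => ?_) (fun r (hr : 0 < r) => by positivity) (l := 0) ?_
  · have := (((hasDerivAt_pow 2 r).const_add 1).rpow_const (p := p + 1)
      (Or.inl (by positivity))).div_const (2 * (p + 1))
    refine this.congr_deriv ?_
    rw [add_sub_cancel_right]
    field_simp
    norm_num
    ring
  · simpa using (tendsto_one_add_sq_rpow_atTop_zero (by linarith : p + 1 < 0)).div_const
      (2 * (p + 1))

section Radial

variable {b : ℂ}

lemma hasDerivAt_one_add_sq_cpow (hb : b + 1 ≠ 0) (r : ℝ) :
    HasDerivAt (fun r : ℝ => ((1 + r ^ 2 : ℝ) : ℂ) ^ (b + 1) / (2 * (b + 1)))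
      (r * ((1 + r ^ 2 : ℝ) : ℂ) ^ b) r := by
  have hmem : ((1 + r ^ 2 : ℝ) : ℂ) ∈ Complex.slitPlane :=
    Complex.ofReal_mem_slitPlane.2 (by positivity)
  push_cast at hmem ⊢
  have := ((((hasDerivAt_pow 2 (r : ℂ)).const_add 1).cpow_const (c := b + 1) hmem).comp_ofReal
    ).div_const (2 * (b + 1))
  refine this.congr_deriv ?_
  rw [add_sub_cancel_right]
  field_simp
  norm_num
  ring

lemma integrableOn_Ioi_mul_one_add_sq_cpow (hb : b.re < -1) :
    IntegrableOn (fun r : ℝ => (r : ℂ) * ((1 + r ^ 2 : ℝ) : ℂ) ^ b) (Ioi 0) := by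
  refine (integrableOn_Ioi_mul_one_add_sq_rpow hb).mono' (by fun_prop) ?_
  filter_upwards [ae_restrict_mem measurableSet_Ioi] with r (hr : 0 < r)
  rw [norm_mul, Complex.norm_real, norm_of_nonneg hr.le,
    Complex.norm_cpow_eq_rpow_re_of_pos (by positivity)]

lemma integral_Ioi_mul_one_add_sq_cpow (hb : b.re < -1) :
    ∫ r in Ioi (0 : ℝ), (r : ℂ) * ((1 + r ^ 2 : ℝ) : ℂ) ^ b = -1 / (2 * (b + 1)) := by
  have hb1 : b + 1 ≠ 0 := fun h => by simpa [h] using (show (b + 1).re < 0 by simp; linarith)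
  have hlim : Tendsto (fun r : ℝ => ((1 + r ^ 2 : ℝ) : ℂ) ^ (b + 1)) atTop (nhds 0) := by
    rw [tendsto_zero_iff_norm_tendsto_zero]
    refine (tendsto_one_add_sq_rpow_atTop_zero (p := (b + 1).re) (by simp; linarith)).congr
      fun r => ?_
    rw [Complex.norm_cpow_eq_rpow_re_of_pos (by positivity)]
  rw [integral_Ioi_of_hasDerivAt_of_tendsto' (fun r _ => hasDerivAt_one_add_sq_cpow hb1 r)
    (integrableOn_Ioi_mul_one_add_sq_cpow hb) (by simpa using hlim.div_const (2 * (b + 1)))]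
  field_simp
  simp

lemma integral_Ioi_pow_five_mul_one_add_sq_cpow (hb : b.re < -3) :
    ∫ r in Ioi (0 : ℝ), ((r ^ 5 : ℝ) : ℂ) * ((1 + r ^ 2 : ℝ) : ℂ) ^ b =
      -1 / ((b + 1) * (b + 2) * (b + 3)) := by
  have hf0 := integrableOn_Ioi_mul_one_add_sq_cpow (b := b) (by linarith)
  have hf1 := integrableOn_Ioi_mul_one_add_sq_cpow (b := b + 1) (by simp; linarith)
  have hf2 := integrableOn_Ioi_mul_one_add_sq_cpow (b := b + 2) (by simp; linarith)
  have hsplit (r : ℝ) : ((r ^ 5 : ℝ) : ℂ) * ((1 + r ^ 2 : ℝ) : ℂ) ^ b =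
      r * ((1 + r ^ 2 : ℝ) : ℂ) ^ (b + 2) - 2 * (r * ((1 + r ^ 2 : ℝ) : ℂ) ^ (b + 1)) +
        r * ((1 + r ^ 2 : ℝ) : ℂ) ^ b := by
    have h0 : ((1 + r ^ 2 : ℝ) : ℂ) ≠ 0 := Complex.ofReal_ne_zero.2 (by positivity)
    simp only [Complex.cpow_add _ _ h0, Complex.cpow_one, Complex.cpow_two]
    push_cast
    ring
  rw [setIntegral_congr_fun measurableSet_Ioi fun r _ => hsplit r, integral_add, integral_sub,
    integral_const_mul, integral_Ioi_mul_one_add_sq_cpow (by simp; linarith),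
    integral_Ioi_mul_one_add_sq_cpow (by simp; linarith),
    integral_Ioi_mul_one_add_sq_cpow (by linarith)]
  · have hne (k : ℂ) (hk : (b + k).re < 0) : b + k ≠ 0 := fun h => by simp [h] at hk
    have h1 := hne 1 (by simp; linarith)
    have h2 := hne 2 (by simp; linarith)
    have h3 := hne 3 (by simp; linarith)
    rw [show b + 2 + 1 = b + 3 by ring, show b + 1 + 1 = b + 2 by ring]
    field_simp
    ring
  exacts [hf2, hf1.const_mul 2, hf2.sub (hf1.const_mul 2), hf0]

end Radial

lemma integral_cos_pow_four : ∫ θ in Ioo (-π) π, cos θ ^ 4 = 3 * π / 4 := by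
  rw [← integral_Ioc_eq_integral_Ioo, ← intervalIntegral.integral_of_le (by linarith [pi_pos]),
    integral_cos_pow (n := 2)]
  norm_num
  ring

lemma integral_fst_pow_mul_comp_sq_add_sq (n : ℕ) (g : ℝ → ℂ) :
    ∫ ξ : ℝ × ℝ, ((ξ.1 ^ n : ℝ) : ℂ) * g (ξ.1 ^ 2 + ξ.2 ^ 2) =
      (∫ r in Ioi (0 : ℝ), ((r ^ (n + 1) : ℝ) : ℂ) * g (r ^ 2)) *
        ((∫ θ in Ioo (-π) π, cos θ ^ n : ℝ) : ℂ) := by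
  rw [← integral_comp_polarCoord_symm, ← integral_complex_ofReal, ← setIntegral_prod_mul,
    ← Measure.volume_eq_prod]
  refine setIntegral_congr_fun (measurableSet_Ioi.prod measurableSet_Ioo) fun p _ => ?_
  change p.1 • (((p.1 * cos p.2) ^ n : ℝ) * g ((p.1 * cos p.2) ^ 2 + (p.1 * sin p.2) ^ 2)) = _
  have hsq : (p.1 * cos p.2) ^ 2 + (p.1 * sin p.2) ^ 2 = p.1 ^ 2 := by
    linear_combination p.1 ^ 2 * cos_sq_add_sin_sq p.2
  rw [hsq, Complex.real_smul]
  push_cast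
  ring

lemma integrable_one_add_sq_add_sq_rpow {p : ℝ} (hp : p < -1) :
    Integrable fun ξ : ℝ × ℝ => (1 + ξ.1 ^ 2 + ξ.2 ^ 2) ^ p := by
  have hdim : (Module.finrank ℝ (ℝ × ℝ) : ℝ) < -2 * p := by simp; linarith
  refine (integrable_rpow_neg_one_add_norm_sq hdim).mono'
    (by fun_prop : Measurable _).aestronglyMeasurable (.of_forall fun ξ => ?_)
  have hnorm : ‖ξ‖ ^ 2 ≤ ξ.1 ^ 2 + ξ.2 ^ 2 := by
    rw [Prod.norm_def, Real.norm_eq_abs, Real.norm_eq_abs]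
    rcases max_choice |ξ.1| |ξ.2| with h | h <;> rw [h, sq_abs] <;>
      linarith [sq_nonneg ξ.1, sq_nonneg ξ.2]
  rw [norm_of_nonneg (by positivity), show -(-2 * p) / 2 = p by ring]
  exact rpow_le_rpow_of_nonpos (by positivity) (by linarith) (by linarith)

lemma integrable_fst_pow_four_mul_one_add_sq_cpow {w : ℂ} (hw : w.re < -3) :
    Integrable fun ξ : ℝ × ℝ =>
      ((ξ.1 ^ 4 : ℝ) : ℂ) * ((1 + ξ.1 ^ 2 + ξ.2 ^ 2 : ℝ) : ℂ) ^ w := by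
  refine (integrable_one_add_sq_add_sq_rpow (p := w.re + 2) (by linarith)).mono'
    (by fun_prop) (.of_forall fun ξ => ?_)
  have hpos : 0 < 1 + ξ.1 ^ 2 + ξ.2 ^ 2 := by positivity
  rw [norm_mul, Complex.norm_real, Complex.norm_cpow_eq_rpow_re_of_pos hpos, rpow_add hpos,
    rpow_two, mul_comm, norm_of_nonneg (by positivity)]
  gcongr
  nlinarith [sq_nonneg ξ.1, sq_nonneg ξ.2]

/-- For `Re s > 2`, `ξ ↦ ξ₁⁴ (1 + |ξ|²)^(-s/2 - 3)` is integrable on `ℝ²` and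
`(1/(4π²)) ∫_{ℝ²} ξ₁⁴ (1 + |ξ|²)^(-s/2 - 3) dξ = 3/(2π s (s+2)(s+4))`. -/
theorem integral_pow_four_mul_one_add_sq_cpow (s : ℂ) (hs : 2 < s.re) :
    Integrable (fun ξ : ℝ × ℝ =>
      ((ξ.1 ^ 4 : ℝ) : ℂ) * ((1 + ξ.1 ^ 2 + ξ.2 ^ 2 : ℝ) : ℂ) ^ (-s / 2 - 3)) ∧
    (1 / (4 * (Real.pi : ℂ) ^ 2)) *
        ∫ ξ : ℝ × ℝ,
          ((ξ.1 ^ 4 : ℝ) : ℂ) * ((1 + ξ.1 ^ 2 + ξ.2 ^ 2 : ℝ) : ℂ) ^ (-s / 2 - 3) =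
      3 / (2 * (Real.pi : ℂ) * s * (s + 2) * (s + 4)) := by
  have hw : (-s / 2 - 3).re < -3 := by simp; linarith
  refine ⟨integrable_fst_pow_four_mul_one_add_sq_cpow hw, ?_⟩
  have hpolar := integral_fst_pow_mul_comp_sq_add_sq 4 fun t => ((1 + t : ℝ) : ℂ) ^ (-s / 2 - 3)
  simp only [← add_assoc] at hpolar
  rw [hpolar, integral_Ioi_pow_five_mul_one_add_sq_cpow hw, integral_cos_pow_four]
  have hs0 : s ≠ 0 := Complex.ne_zero_of_re_pos (by linarith)
  have hs2 : s + 2 ≠ 0 := Complex.ne_zero_of_re_pos (by simp; linarith)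
  have hs4 : s + 4 ≠ 0 := Complex.ne_zero_of_re_pos (by simp; linarith)
  rw [show (-s / 2 - 3 + 1) * (-s / 2 - 3 + 2) * (-s / 2 - 3 + 3) = -(s * (s + 2) * (s + 4)) / 8
    by ring]
  field_simp
  push_cast
  ring
end
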